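/- arXiv:2010.13243 — 3 statements merged into one kernel-verified Lean document; each statement's English description precedes it below -/
import Mathlib

section
/- Let B_r(y_0) ⊂ ℂ^d be the open ball of radius r around y_0, f ∈ C^1(B_r(y_0), ℂ^d) with det f'(y_0) ≠ 0, T := (f'(y_0))^{-1}, and let ϱ := sup_{y∈B_r(y_0)} ‖1 − T f'(y)‖ < 1. Set λ := ‖T‖/(1−ϱ), ρ := r/λ, and z_0 := f(y_0). Then the open ball B_ρ(z_0) is contained in f(B_r(y_0)). -/
/-! Composing with `T` turns `f` into a map `g = T ∘ f` whose derivative stays within `ϱ` of the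
identity, so by the mean value inequality `g` approximates the identity with constant `ϱ` on the
ball. Newton-type iteration for such maps covers the ball of radius `(1 - ϱ) r` around `g y₀`,
and `T` maps `B_ρ(f y₀)` into that ball because it is `‖T‖`-Lipschitz. Since `T` is injective,
a preimage under `g` is a preimage under `f`. -/

open Function Metric Set
open scoped NNReal

theorem Convex.approximatesLinearOn_of_hasFDerivWithinAt {𝕜 E F : Type*}
    [NontriviallyNormedField 𝕜] [IsRCLikeNormedField 𝕜] [NormedAddCommGroup E] [NormedSpace ℝ E]
    [NormedSpace 𝕜 E] [NormedAddCommGroup F] [NormedSpace 𝕜 F] {s : Set E} (hs : Convex ℝ s)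
    {f : E → F} {f' : E → E →L[𝕜] F} {φ : E →L[𝕜] F} {c : ℝ≥0}
    (hf : ∀ x ∈ s, HasFDerivWithinAt f (f' x) s x) (bound : ∀ x ∈ s, ‖f' x - φ‖ ≤ c) :
    ApproximatesLinearOn f φ s c := fun _ hx _ hy =>
  hs.norm_image_sub_le_of_norm_hasFDerivWithin_le' hf bound hy hx

theorem ApproximatesLinearOn.ball_subset_image_ball {𝕜 E : Type*} [NontriviallyNormedField 𝕜]
    [NormedAddCommGroup E] [NormedSpace 𝕜 E] [CompleteSpace E] {g : E → E} {x : E} {r : ℝ}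
    {c : ℝ≥0} (hg : ApproximatesLinearOn g (ContinuousLinearMap.id 𝕜 E) (ball x r) c)
    (hc : c < 1) : ball (g x) (r * (1 - c)) ⊆ g '' ball x r := by
  intro z hz
  have h1c : (0 : ℝ) < 1 - c := sub_pos.2 (mod_cast hc)
  set ε := dist z (g x) / (1 - c) with hε
  have hεr : ε < r := (div_lt_iff₀ h1c).2 (mem_ball.1 hz)
  have hεs : closedBall x ε ⊆ ball x r := closedBall_subset_ball hεr
  let idInv : (ContinuousLinearMap.id 𝕜 E).NonlinearRightInverse :=
    ⟨id, 1, fun y => by simp, fun _ => rfl⟩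
  have hzε : z ∈ closedBall (g x) (((idInv.nnnorm : ℝ)⁻¹ - c) * ε) := by
    rw [mem_closedBall, show (idInv.nnnorm : ℝ) = 1 from rfl, inv_one, hε,
      mul_div_cancel₀ _ h1c.ne']
  obtain ⟨y, hy, hgy⟩ :=
    hg.surjOn_closedBall_of_nonlinearRightInverse idInv (by positivity) hεs hzε
  exact ⟨y, hεs hy, hgy⟩

theorem ContinuousLinearMap.mapsTo_ball_div_opNorm {𝕜 E F : Type*} [NontriviallyNormedField 𝕜]
    [SeminormedAddCommGroup E] [NormedSpace 𝕜 E] [SeminormedAddCommGroup F] [NormedSpace 𝕜 F]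
    (T : E →L[𝕜] F) (x : E) (s : ℝ) : MapsTo T (ball x (s / ‖T‖)) (ball (T x) s) := by
  intro y hy
  rcases (norm_nonneg T).eq_or_lt with hT | hT
  · rw [← hT, div_zero, ball_zero] at hy
    exact hy.elim
  calc dist (T y) (T x) ≤ ‖T‖ * dist y x := T.lipschitz.dist_le_mul y x
    _ < ‖T‖ * (s / ‖T‖) := mul_lt_mul_of_pos_left hy hT
    _ = s := mul_div_cancel₀ _ hT.ne'

theorem inverse_function_theorem_range_ball_general
    (d : ℕ) (r : ℝ) (hr : 0 < r) (y₀ : Fin d → ℂ)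
    (f : (Fin d → ℂ) → (Fin d → ℂ))
    (f' : (Fin d → ℂ) → ((Fin d → ℂ) →L[ℂ] (Fin d → ℂ)))
    (hf : ∀ y ∈ Metric.ball y₀ r, HasFDerivWithinAt f (f' y) (Metric.ball y₀ r) y)
    (T : (Fin d → ℂ) →L[ℂ] (Fin d → ℂ))
    (hT2 : f' y₀ ∘L T = 1)
    (ϱ : ℝ) (hϱ : ϱ < 1)
    (hϱ' : ∀ y ∈ Metric.ball y₀ r, ‖1 - T ∘L f' y‖ ≤ ϱ) :
    Metric.ball (f y₀) (r / (‖T‖ / (1 - ϱ))) ⊆ f '' Metric.ball y₀ r := by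
  intro z hz
  have hϱ0 : 0 ≤ ϱ := (norm_nonneg _).trans (hϱ' y₀ (mem_ball_self hr))
  have happrox : ApproximatesLinearOn (T ∘ f) (ContinuousLinearMap.id ℂ _) (ball y₀ r) ⟨ϱ, hϱ0⟩ :=
    (convex_ball y₀ r).approximatesLinearOn_of_hasFDerivWithinAt
      (fun y hy => T.hasFDerivAt.comp_hasFDerivWithinAt y (hf y hy))
      (fun y hy => by rw [← norm_neg, neg_sub]; exact hϱ' y hy)
  have hTz : T z ∈ ball (T (f y₀)) (r * (1 - ϱ)) :=
    T.mapsTo_ball_div_opNorm _ _ (by rwa [div_div_eq_mul_div] at hz)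
  obtain ⟨y, hy, hTy⟩ := happrox.ball_subset_image_ball (c := ⟨ϱ, hϱ0⟩) hϱ hTz
  have hT_inj : Injective T := LeftInverse.injective (g := f' y₀) fun w => congr($hT2 w)
  exact ⟨y, hy, hT_inj hTy⟩

/-- Quantitative inverse function theorem, part 3 (surjectivity onto a ball): if `f` is `C¹`
on the open ball `B_r(y₀) ⊆ ℂ^d`, `T = (f'(y₀))⁻¹` and `ϱ := sup ‖1 - T f'‖ < 1`, then,
with `λ := ‖T‖/(1-ϱ)` and `ρ := r/λ`, the ball `B_ρ(f y₀)` is contained in `f(B_r(y₀))`. -/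
theorem inverse_function_theorem_range_ball
    (d : ℕ) (r : ℝ) (hr : 0 < r) (y₀ : Fin d → ℂ)
    (f : (Fin d → ℂ) → (Fin d → ℂ))
    (f' : (Fin d → ℂ) → ((Fin d → ℂ) →L[ℂ] (Fin d → ℂ)))
    (hf : ∀ y ∈ Metric.ball y₀ r, HasFDerivWithinAt f (f' y) (Metric.ball y₀ r) y)
    (hdet : LinearMap.det ((f' y₀ : (Fin d → ℂ) →L[ℂ] (Fin d → ℂ)) :
      (Fin d → ℂ) →ₗ[ℂ] (Fin d → ℂ)) ≠ 0)
    (T : (Fin d → ℂ) →L[ℂ] (Fin d → ℂ))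
    (hT1 : T ∘L f' y₀ = 1) (hT2 : f' y₀ ∘L T = 1)
    (ϱ : ℝ) (hϱ : ϱ < 1)
    (hϱ' : ∀ y ∈ Metric.ball y₀ r, ‖1 - T ∘L f' y‖ ≤ ϱ) :
    Metric.ball (f y₀) (r / (‖T‖ / (1 - ϱ))) ⊆ f '' Metric.ball y₀ r :=
  inverse_function_theorem_range_ball_general d r hr y₀ f f' hf T hT2 ϱ hϱ hϱ'
end

section
/- Let A ⊆ ℝ^d be a nonempty Lebesgue-measurable set of finite measure and f : A → ℝ^d be such that f − id is Lipschitz on A with constant δ := Lip_A(f − id). Then |meas(f(A)) − meas(A)| ≤ ((1+δ)^d − 1) · meas(A). -/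
/-!
Write `f = id + g` with `g` `δ`-Lipschitz on `A`. Then `f` is `(1 + δ)`-Lipschitz on `A`, and for
`δ < 1` it is `(1 - δ)⁻¹`-antilipschitz there. Lebesgue measure on a `d`-dimensional inner product
space is a multiple of the `d`-dimensional Hausdorff measure, which scales by at most `K ^ d` under a
`K`-Lipschitz map, so `(1 - δ) ^ d · meas A ≤ meas (f A) ≤ (1 + δ) ^ d · meas A`. Since
`(1 - δ) ^ d + (1 + δ) ^ d ≥ 2`, both deviations are at most `((1 + δ) ^ d - 1) · meas A`; for
`δ ≥ 1` and `d ≥ 1` the lower deviation is at most `meas A ≤ ((1 + δ) ^ d - 1) · meas A`.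
-/

open MeasureTheory Measure Set Module
open scoped NNReal ENNReal

section EMetricSpace

variable {X Y : Type*} [EMetricSpace X] [MeasurableSpace X] [BorelSpace X]
  [EMetricSpace Y] [MeasurableSpace Y] [BorelSpace Y] {K : ℝ≥0} {f : X → Y} {s : Set X}

theorem LipschitzOnWith.euclideanHausdorffMeasure_image_le (hf : LipschitzOnWith K f s) (d : ℕ) :
    μHE[d] (f '' s) ≤ (K : ℝ≥0∞) ^ d * μHE[d] s := by
  have key := hf.hausdorffMeasure_image_le (d := d) (Nat.cast_nonneg d)
  rw [ENNReal.rpow_natCast] at key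
  simp_rw [euclideanHausdorffMeasure_def, Measure.smul_apply, ENNReal.smul_def, smul_eq_mul]
  rw [mul_left_comm]
  gcongr

theorem AntilipschitzWith.euclideanHausdorffMeasure_le_image
    (hf : AntilipschitzWith K (s.domRestrict f)) (d : ℕ) :
    μHE[d] s ≤ (K : ℝ≥0∞) ^ d * μHE[d] (f '' s) := by
  have key := hf.hausdorffMeasure_preimage_le (d := d) (Nat.cast_nonneg d) (f '' s)
  have hpre : s.domRestrict f ⁻¹' (f '' s) = univ := eq_univ_of_forall fun x => ⟨x, x.2, rfl⟩
  rw [hpre, ← isometry_subtype_coe.hausdorffMeasure_image (Or.inl (Nat.cast_nonneg d)),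
    image_univ, Subtype.range_coe, ENNReal.rpow_natCast] at key
  simp_rw [euclideanHausdorffMeasure_def, Measure.smul_apply, ENNReal.smul_def, smul_eq_mul]
  rw [mul_left_comm]
  gcongr

end EMetricSpace

section InnerProductSpace

variable {V : Type*} [NormedAddCommGroup V] [InnerProductSpace ℝ V] [FiniteDimensional ℝ V]
  [MeasurableSpace V] [BorelSpace V] {K : ℝ≥0} {f : V → V} {s : Set V}

theorem LipschitzOnWith.volume_image_le (hf : LipschitzOnWith K f s) :
    volume (f '' s) ≤ (K : ℝ≥0∞) ^ finrank ℝ V * volume s := by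
  simpa only [InnerProductSpace.euclideanHausdorffMeasure_eq_volume]
    using hf.euclideanHausdorffMeasure_image_le (finrank ℝ V)

theorem AntilipschitzWith.volume_le_image (hf : AntilipschitzWith K (s.domRestrict f)) :
    volume s ≤ (K : ℝ≥0∞) ^ finrank ℝ V * volume (f '' s) := by
  simpa only [InnerProductSpace.euclideanHausdorffMeasure_eq_volume]
    using hf.euclideanHausdorffMeasure_le_image (finrank ℝ V)

end InnerProductSpace

section NearIdentity

variable {E : Type*} [SeminormedAddCommGroup E] {δ : ℝ≥0} {f : E → E} {s : Set E}

theorem LipschitzOnWith.of_sub_id (hf : LipschitzOnWith δ (fun x => f x - x) s) :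
    LipschitzOnWith (δ + 1) f s := by
  simpa only [id, sub_add_cancel] using hf.add LipschitzWith.id.lipschitzOnWith

theorem LipschitzOnWith.antilipschitzWith_domRestrict_of_sub_id
    (hf : LipschitzOnWith δ (fun x => f x - x) s) (hδ : δ < 1) :
    AntilipschitzWith (1 - δ)⁻¹ (s.domRestrict f) := by
  simpa only [inv_one] using isometry_subtype_coe.antilipschitz.add_sub_lipschitzWith
    (g := s.domRestrict f) hf.to_restrict (by rwa [inv_one])

end NearIdentity

theorem ENNReal.toReal_le_coe_pow_mul_toReal {x y : ℝ≥0∞} {c : ℝ≥0} {n : ℕ} (hy : y ≠ ⊤)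
    (h : x ≤ (c : ℝ≥0∞) ^ n * y) : x.toReal ≤ (c : ℝ) ^ n * y.toReal := by
  simpa only [ENNReal.toReal_mul, ENNReal.toReal_pow, ENNReal.coe_toReal]
    using ENNReal.toReal_mono (by finiteness) h

theorem abs_sub_le_one_add_pow_sub_one_mul {n : ℕ} {a b δ : ℝ} (hn : n ≠ 0) (ha : 0 ≤ a)
    (hb : 0 ≤ b) (hδ : 0 ≤ δ) (hup : b ≤ (1 + δ) ^ n * a)
    (hlow : δ < 1 → a ≤ (1 - δ)⁻¹ ^ n * b) : |b - a| ≤ ((1 + δ) ^ n - 1) * a := by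
  rw [abs_sub_le_iff, sub_one_mul]
  refine ⟨by linarith, ?_⟩
  rcases lt_or_ge δ 1 with hδ1 | hδ1
  · have hlow' : (1 - δ) ^ n * a ≤ b := by
      calc (1 - δ) ^ n * a ≤ (1 - δ) ^ n * ((1 - δ)⁻¹ ^ n * b) := by gcongr; exact hlow hδ1
        _ = b := by rw [← mul_assoc, ← mul_pow, mul_inv_cancel₀ (by linarith), one_pow, one_mul]
    have hsum : 2 ≤ (1 - δ) ^ n + (1 + δ) ^ n := by
      have hplus := one_add_mul_le_pow (a := δ) (by linarith) n
      have hminus := one_add_mul_le_pow (a := -δ) (by linarith) n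
      rw [← sub_eq_add_neg] at hminus
      linarith
    nlinarith
  · have htwo : 2 ≤ (1 + δ) ^ n :=
      calc (2 : ℝ) ≤ 1 + δ := by linarith
        _ ≤ (1 + δ) ^ n := le_self_pow₀ (by linarith) hn
    nlinarith

theorem abs_measure_image_sub_measure_le_general
    (d : ℕ) (A : Set (EuclideanSpace ℝ (Fin d))) (hne : A.Nonempty)
    (hfin : volume A < ⊤)
    (f : EuclideanSpace ℝ (Fin d) → EuclideanSpace ℝ (Fin d))
    (δ : NNReal) (hf : LipschitzOnWith δ (fun x => f x - x) A) :
    |(volume (f '' A)).toReal - (volume A).toReal| ≤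
      ((1 + (δ : ℝ)) ^ d - 1) * (volume A).toReal := by
  rcases eq_or_ne d 0 with rfl | hd
  · rw [(hne.image f).eq_univ, hne.eq_univ]
    simp
  have hup : volume (f '' A) ≤ ((δ + 1 : ℝ≥0) : ℝ≥0∞) ^ d * volume A := by
    simpa using hf.of_sub_id.volume_image_le
  have himage_fin : volume (f '' A) ≠ ⊤ := ne_top_of_le_ne_top (by finiteness) hup
  refine abs_sub_le_one_add_pow_sub_one_mul hd ENNReal.toReal_nonneg ENNReal.toReal_nonneg
    δ.coe_nonneg ?_ fun hδ => ?_
  · simpa [add_comm] using ENNReal.toReal_le_coe_pow_mul_toReal hfin.ne hup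
  · have hδ' : δ < 1 := by exact_mod_cast hδ
    have hlow : volume A ≤ ((1 - δ)⁻¹ : ℝ≥0) ^ d * volume (f '' A) := by
      simpa using (hf.antilipschitzWith_domRestrict_of_sub_id hδ').volume_le_image
    simpa [NNReal.coe_sub hδ'.le] using ENNReal.toReal_le_coe_pow_mul_toReal himage_fin hlow

/-- Lemma B.5, second part: if `f - id` is Lipschitz on a measurable set `A ⊆ ℝ^d` of finite
measure with Lipschitz constant `δ`, then `|meas(f(A)) - meas(A)| ≤ ((1+δ)^d - 1) · meas(A)`. -/
theorem abs_measure_image_sub_measure_le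
    (d : ℕ) (A : Set (EuclideanSpace ℝ (Fin d))) (hne : A.Nonempty)
    (hA : MeasurableSet A) (hfin : volume A < ⊤)
    (f : EuclideanSpace ℝ (Fin d) → EuclideanSpace ℝ (Fin d))
    (δ : NNReal) (hf : LipschitzOnWith δ (fun x => f x - x) A) :
    |(volume (f '' A)).toReal - (volume A).toReal| ≤
      ((1 + (δ : ℝ)) ^ d - 1) * (volume A).toReal :=
  abs_measure_image_sub_measure_le_general d A hne hfin f δ hf
end

section
/- Let x ∈ ℝ^d with y_0 ∈ 𝒟 ⊂ ℝ^d, K real-analytic on a neighbourhood B_ρ₀(y_0) with ‖K_{yy}‖ ≤ M on B_{ρ₀}(y_0), ‖K_{yy}(y_0)^{-1}‖ ≤ L, and let 0 < r ≤ ρ₀ satisfy d²·L·M·r/(ρ₀ − r) ≤ 1/2. Then the frequency map ω_0(y) := ∂_y K(y) is injective on B_r(y_0) (in fact a diffeomorphism onto its image). -/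
/-!
Cauchy estimates along complex lines show that the frequency map `ω = ∂K` of a holomorphic `K` is
again holomorphic. Applying the Schwarz lemma to `t ↦ ω'(y₀ + t (p - y₀)) u` on the disc of radius
`ρ₀ / ‖p - y₀‖` bounds the variation of the Hessian: `‖ω'(p) - ω'(y₀)‖ ≤ 2 M ‖p - y₀‖ / ρ₀`.
By the mean value inequality `ω` is therefore `2 M r / ρ₀`-close to its linearisation at `y₀` on
`B_r(y₀)`, and since `T` inverts that linearisation with `‖T‖ · 2 M r / ρ₀ < 1`, two points with
the same frequency coincide.
-/

open Metric Set Filter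
open scoped Topology

variable {E F : Type*} [NormedAddCommGroup E] [NormedSpace ℂ E]
  [NormedAddCommGroup F] [NormedSpace ℂ F]

theorem norm_dslope_le_of_norm_le {h : ℂ → F} {R C : ℝ} (hd : DifferentiableOn ℂ h (ball 0 R))
    (hC : ∀ s ∈ ball (0 : ℂ) R, ‖h s‖ ≤ C) {s : ℂ} (hs : s ∈ ball (0 : ℂ) R) :
    ‖dslope h 0 s‖ ≤ 2 * C / R := by
  have hR : 0 < R := pos_of_mem_ball hs
  refine Complex.norm_dslope_le_div_of_mapsTo_ball hd (fun z hz => ?_) hs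
  rw [mem_closedBall, dist_eq_norm]
  calc ‖h z - h 0‖ ≤ ‖h z‖ + ‖h 0‖ := norm_sub_le _ _
    _ ≤ 2 * C := by linarith [hC z hz, hC 0 (mem_ball_self hR)]

theorem norm_dslope_sub_deriv_le [CompleteSpace F] {h : ℂ → F} {R C : ℝ}
    (hd : DifferentiableOn ℂ h (ball 0 R)) (hC : ∀ s ∈ ball (0 : ℂ) R, ‖h s‖ ≤ C) {s : ℂ}
    (hs : s ∈ ball (0 : ℂ) R) :
    ‖dslope h 0 s - deriv h 0‖ ≤ 4 * C / R ^ 2 * ‖s‖ := by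
  have hR : 0 < R := pos_of_mem_ball hs
  have hdslope : DifferentiableOn ℂ (dslope h 0) (ball 0 R) :=
    (Complex.differentiableOn_dslope (ball_mem_nhds _ hR)).mpr hd
  have hmaps : MapsTo (dslope h 0) (ball 0 R) (closedBall (dslope h 0 0) (4 * C / R)) := by
    intro z hz
    rw [mem_closedBall, dist_eq_norm]
    calc ‖dslope h 0 z - dslope h 0 0‖ ≤ ‖dslope h 0 z‖ + ‖dslope h 0 0‖ := norm_sub_le _ _
      _ ≤ 2 * C / R + 2 * C / R := add_le_add (norm_dslope_le_of_norm_le hd hC hz)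
          (norm_dslope_le_of_norm_le hd hC (mem_ball_self hR))
      _ = 4 * C / R := by ring
  have := Complex.dist_le_div_mul_dist_of_mapsTo_ball hdslope hmaps hs
  rwa [dslope_same, dist_eq_norm, dist_zero_right, div_div, ← sq] at this

theorem tendstoUniformlyOn_nhdsNE_of_norm_sub_le {X G : Type*} [SeminormedAddCommGroup G]
    {φ : ℂ → X → G} {g : X → G} {s : Set X} {δ D : ℝ} (hδ : 0 < δ)
    (h : ∀ σ ∈ ball (0 : ℂ) δ, σ ≠ 0 → ∀ x ∈ s, ‖φ σ x - g x‖ ≤ D * ‖σ‖) :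
    TendstoUniformlyOn φ g (𝓝[≠] 0) s := by
  rw [Metric.tendstoUniformlyOn_iff]
  intro ε hε
  have hsmall : Tendsto (fun σ : ℂ => D * ‖σ‖) (𝓝 0) (𝓝 0) := by
    have hcont : Continuous fun σ : ℂ => D * ‖σ‖ := by fun_prop
    simpa using hcont.tendsto 0
  filter_upwards [nhdsWithin_le_nhds (ball_mem_nhds 0 hδ),
    nhdsWithin_le_nhds (hsmall.eventually (gt_mem_nhds hε)), self_mem_nhdsWithin]
    with σ hσ hDσ hσ0 x hx
  rw [dist_comm, dist_eq_norm]
  exact (h σ hσ hσ0 x hx).trans_lt hDσ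

theorem differentiableOn_deriv_of_separately [CompleteSpace F] {g : ℂ → ℂ → F} {s₀ : ℂ}
    {R δ C : ℝ} (hδ : 0 < δ)
    (hg₁ : ∀ s ∈ ball s₀ R, DifferentiableOn ℂ (g s) (ball 0 δ))
    (hg₂ : ∀ σ ∈ ball (0 : ℂ) δ, DifferentiableOn ℂ (fun s => g s σ) (ball s₀ R))
    (hC : ∀ s ∈ ball s₀ R, ∀ σ ∈ ball (0 : ℂ) δ, ‖g s σ‖ ≤ C) :
    DifferentiableOn ℂ (fun s => deriv (g s) 0) (ball s₀ R) := by
  have hunif : TendstoUniformlyOn (fun σ s => dslope (g s) 0 σ) (fun s => deriv (g s) 0)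
      (𝓝[≠] 0) (ball s₀ R) :=
    tendstoUniformlyOn_nhdsNE_of_norm_sub_le hδ fun σ hσ _ s hs =>
      norm_dslope_sub_deriv_le (hg₁ s hs) (hC s hs) hσ
  refine hunif.tendstoLocallyUniformlyOn.differentiableOn ?_ isOpen_ball
  filter_upwards [nhdsWithin_le_nhds (ball_mem_nhds 0 hδ), self_mem_nhdsWithin] with σ hσ hσ0
  have hslope : ∀ s, dslope (g s) 0 σ = σ⁻¹ • (g s σ - g s 0) := fun s => by
    rw [dslope_of_ne _ hσ0, slope_def_module, sub_zero]
  simp_rw [hslope]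
  exact ((hg₂ σ hσ).sub (hg₂ 0 (mem_ball_self hδ))).const_smul σ⁻¹

theorem exists_ball_subset_forall_norm_le {X G : Type*} [PseudoMetricSpace X]
    [SeminormedAddCommGroup G] {g : X → G} {x : X}
    {U : Set X} (hU : U ∈ 𝓝 x) (hg : ContinuousAt g x) :
    ∃ ε > 0, ball x ε ⊆ U ∧ ∀ y ∈ ball x ε, ‖g y‖ ≤ ‖g x‖ + 1 := by
  have hnhds : U ∩ {y | ‖g y‖ < ‖g x‖ + 1} ∈ 𝓝 x :=
    inter_mem hU (hg.norm.eventually (gt_mem_nhds (lt_add_one _)))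
  obtain ⟨ε, hε, hsub⟩ := Metric.mem_nhds_iff.1 hnhds
  exact ⟨ε, hε, fun y hy => (hsub hy).1, fun y hy => (hsub hy).2.le⟩

theorem differentiableOn_fderiv_apply_along_line [CompleteSpace F] {f : E → F} {U : Set E}
    (hf : DifferentiableOn ℂ f U) (hU : IsOpen U) (q v w : E) :
    DifferentiableOn ℂ (fun s : ℂ => fderiv ℂ f (q + s • v) w) {s | q + s • v ∈ U} := by
  intro s₀ hs₀
  set Φ : ℂ × ℂ → E := fun p => q + p.1 • v + p.2 • w
  have hΦ : Continuous Φ := by fun_prop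
  have hΦ₀ : Φ (s₀, 0) = q + s₀ • v := by simp [Φ]
  obtain ⟨ε, hε, hsub, hbd⟩ := exists_ball_subset_forall_norm_le (g := f ∘ Φ)
    (hΦ.continuousAt.preimage_mem_nhds (hΦ₀ ▸ hU.mem_nhds hs₀))
    ((hf.continuousOn.continuousAt (hΦ₀ ▸ hU.mem_nhds hs₀)).comp hΦ.continuousAt)
  rw [← ball_prod_same] at hsub hbd
  have hmem : ∀ s ∈ ball s₀ ε, ∀ σ ∈ ball (0 : ℂ) ε, q + s • v + σ • w ∈ U :=
    fun s hs σ hσ => hsub (mk_mem_prod hs hσ)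
  have hline : DifferentiableOn ℂ (fun s => lineDeriv ℂ f (q + s • v) w) (ball s₀ ε) :=
    differentiableOn_deriv_of_separately (g := fun s σ => f (q + s • v + σ • w)) hε
      (fun s hs => hf.comp (by fun_prop) fun σ hσ => hmem s hs σ hσ)
      (fun σ hσ => hf.comp (by fun_prop) fun s hs => hmem s hs σ hσ)
      (fun s hs σ hσ => hbd (s, σ) (mk_mem_prod hs hσ))
  have hfderiv : EqOn (fun s : ℂ => fderiv ℂ f (q + s • v) w)
      (fun s => lineDeriv ℂ f (q + s • v) w) (ball s₀ ε) := fun s hs =>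
    ((hf.differentiableAt (hU.mem_nhds (by simpa using hmem s hs 0 (mem_ball_self hε)))
      ).lineDeriv_eq_fderiv).symm
  exact ((hline.congr hfderiv).differentiableAt (ball_mem_nhds _ hε)).differentiableWithinAt

theorem norm_fderiv_apply_le_of_norm_le {f : E → F} {p w : E} {δ C : ℝ} (hδ : 0 < δ)
    (hf : DifferentiableOn ℂ f (ball p δ)) (hC : ∀ z ∈ ball p δ, ‖f z‖ ≤ C) (hw : ‖w‖ ≤ 1) :
    ‖fderiv ℂ f p w‖ ≤ 2 * C / δ := by
  have hline : ∀ σ ∈ ball (0 : ℂ) δ, p + σ • w ∈ ball p δ := fun σ hσ => by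
    rw [mem_ball_iff_norm, add_sub_cancel_left, norm_smul]
    exact (mul_le_of_le_one_right (norm_nonneg σ) hw).trans_lt (mem_ball_zero_iff.1 hσ)
  have hderiv : deriv (fun σ : ℂ => f (p + σ • w)) 0 = fderiv ℂ f p w :=
    HasDerivAt.deriv ((hf.differentiableAt (ball_mem_nhds p hδ)).hasFDerivAt.hasLineDerivAt w)
  rw [← hderiv, ← dslope_same]
  exact norm_dslope_le_of_norm_le (hf.comp (by fun_prop) hline)
    (fun σ hσ => hC _ (hline σ hσ)) (mem_ball_self hδ)

section Coordinates

variable {ι : Type*} [Fintype ι] [DecidableEq ι]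

theorem exists_tube_forall_norm_fderiv_le {f : E → F} {U : Set E} (hf : DifferentiableOn ℂ f U)
    (hU : IsOpen U) {z₀ : E} (hz₀ : z₀ ∈ U) (v : E) :
    ∃ ε > 0, ∃ C, ∀ z ∈ ball z₀ ε, ∀ s ∈ ball (0 : ℂ) ε,
      z + s • v ∈ U ∧ ∀ w : E, ‖w‖ ≤ 1 → ‖fderiv ℂ f (z + s • v) w‖ ≤ C := by
  obtain ⟨ρ, hρ, hsub, hbd⟩ := exists_ball_subset_forall_norm_le (hU.mem_nhds hz₀)
    (hf.continuousOn.continuousAt (hU.mem_nhds hz₀))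
  set ε := ρ / 2 / (‖v‖ + 1)
  have hεv : ε * (‖v‖ + 1) = ρ / 2 := div_mul_cancel₀ _ (by positivity)
  refine ⟨ε, by positivity, 2 * (‖f z₀‖ + 1) / (ρ / 2), fun z hz s hs => ?_⟩
  have hline : ‖z + s • v - z₀‖ < ρ / 2 := by
    rw [mem_ball_iff_norm] at hz
    rw [mem_ball_zero_iff] at hs
    calc ‖z + s • v - z₀‖ ≤ ‖z - z₀‖ + ‖s‖ * ‖v‖ := by
          rw [add_sub_right_comm, ← norm_smul]; exact norm_add_le _ _
      _ < ε + ε * ‖v‖ := add_lt_add_of_lt_of_le hz (by gcongr)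
      _ = ρ / 2 := by rw [← hεv]; ring
  have hball : ball (z + s • v) (ρ / 2) ⊆ ball z₀ ρ :=
    ball_subset_ball' (by rw [dist_eq_norm]; linarith)
  refine ⟨hsub (hball (mem_ball_self (half_pos hρ))), fun w hw => ?_⟩
  exact norm_fderiv_apply_le_of_norm_le (half_pos hρ) (hf.mono (hball.trans hsub))
    (fun y hy => hbd y (hball hy)) hw

section Coordinates

variable {ι : Type*} [Fintype ι] [DecidableEq ι]

theorem differentiableOn_fderiv_apply [CompleteSpace F] {f : (ι → ℂ) → F} {U : Set (ι → ℂ)}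
    (hf : DifferentiableOn ℂ f U) (hU : IsOpen U) (v : ι → ℂ) :
    DifferentiableOn ℂ (fun z => fderiv ℂ f z v) U := by
  intro z₀ hz₀
  obtain ⟨ε, hε, C, htube⟩ := exists_tube_forall_norm_fderiv_le hf hU hz₀ v
  have hC : 0 ≤ C := by simpa using (htube z₀ (mem_ball_self hε) 0 (mem_ball_self hε)).2 0 (by simp)
  set ψ : (ι → ℂ) → ι → ℂ → F := fun z i s => fderiv ℂ f (z + s • v) (Pi.single i 1)
  have hψ : ∀ z ∈ ball z₀ ε, ∀ i, DifferentiableOn ℂ (ψ z i) (ball 0 ε) := fun z hz i =>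
    (differentiableOn_fderiv_apply_along_line hf hU z v _).mono fun s hs => (htube z hz s hs).1
  have hψC : ∀ z ∈ ball z₀ ε, ∀ i, ∀ s ∈ ball (0 : ℂ) ε, ‖ψ z i s‖ ≤ C := fun z hz i s hs =>
    (htube z hz s hs).2 _ (by simp [Pi.norm_single])
  -- The `i`-th column of the derivative of `z ↦ σ⁻¹ (f (z + σ v) - f z)` is `dslope (ψ z i) 0 σ`,
  -- which converges uniformly by the Cauchy estimate on `ψ`.
  let e : ((ι → ℂ) →L[ℂ] F) ≃L[ℂ] (ι → F) := ContinuousLinearEquiv.piRing ι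
  set g' : (ι → ℂ) → (ι → ℂ) →L[ℂ] F := fun z => e.symm fun i => deriv (ψ z i) 0
  set N := ‖(e.symm : (ι → F) →L[ℂ] ((ι → ℂ) →L[ℂ] F))‖
  have hunif : TendstoUniformlyOn (fun (σ : ℂ) z => σ⁻¹ • (fderiv ℂ f (z + σ • v) - fderiv ℂ f z))
      g' (𝓝[≠] 0) (ball z₀ ε) := by
    refine tendstoUniformlyOn_nhdsNE_of_norm_sub_le (D := N * (4 * C / ε ^ 2))
      hε fun σ hσ hσ0 z hz => ?_
    have hcoord : σ⁻¹ • (fderiv ℂ f (z + σ • v) - fderiv ℂ f z) - g' z =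
        e.symm fun i => dslope (ψ z i) 0 σ - deriv (ψ z i) 0 := by
      have he : ∀ L i, e L i = L (Pi.single i 1) := fun _ _ => rfl
      apply e.injective
      simp only [g', map_sub, e.apply_symm_apply]
      ext i
      simp [he, ψ, dslope_of_ne _ hσ0, slope_def_module]
    rw [hcoord, mul_assoc]
    refine (ContinuousLinearMap.le_opNorm (e.symm : (ι → F) →L[ℂ] ((ι → ℂ) →L[ℂ] F)) _).trans ?_
    gcongr
    exact (pi_norm_le_iff_of_nonneg (by positivity)).2 fun i =>
      norm_dslope_sub_deriv_le (hψ z hz i) (hψC z hz i) hσ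
  have hderiv : ∀ᶠ p : ℂ × (ι → ℂ) in 𝓝[≠] 0 ×ˢ 𝓝 z₀,
      HasFDerivAt (fun z => p.1⁻¹ • (f (z + p.1 • v) - f z))
        (p.1⁻¹ • (fderiv ℂ f (p.2 + p.1 • v) - fderiv ℂ f p.2)) p.2 := by
    filter_upwards [prod_mem_prod (nhdsWithin_le_nhds (ball_mem_nhds 0 hε)) (ball_mem_nhds z₀ hε)]
      with ⟨σ, z⟩ ⟨hσ, hz⟩
    have hdiff : ∀ y ∈ U, HasFDerivAt f (fderiv ℂ f y) y := fun y hy =>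
      (hf.differentiableAt (hU.mem_nhds hy)).hasFDerivAt
    have h0 : z ∈ U := by simpa using (htube z hz 0 (mem_ball_self hε)).1
    have hσv := (hasFDerivAt_comp_add_right (σ • v)).2 (hdiff _ (htube z hz σ hσ).1)
    exact (hσv.sub (hdiff z h0)).const_smul σ⁻¹
  have hlim : ∀ᶠ z in 𝓝 z₀, Tendsto (fun σ : ℂ => σ⁻¹ • (f (z + σ • v) - f z)) (𝓝[≠] 0)
      (𝓝 (fderiv ℂ f z v)) := by
    filter_upwards [hU.mem_nhds hz₀] with z hz
    exact ((hf.differentiableAt (hU.mem_nhds hz)).hasFDerivAt.hasLineDerivAt v).tendsto_slope_zero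
  have hunif₀ := (tendstoUniformlyOn_iff_tendstoUniformlyOnFilter.1 hunif).mono_right
    (le_principal_iff.2 (ball_mem_nhds z₀ hε))
  exact (hasFDerivAt_of_tendstoUniformlyOnFilter hunif₀ hderiv hlim).differentiableAt
    |>.differentiableWithinAt

end Coordinates

theorem norm_fderiv_sub_fderiv_le [CompleteSpace F] {f : E → F} {y₀ p : E} {ρ M : ℝ}
    (hf : DifferentiableOn ℂ f (ball y₀ ρ)) (hM : ∀ y ∈ ball y₀ ρ, ‖fderiv ℂ f y‖ ≤ M)
    (hp : p ∈ ball y₀ ρ) :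
    ‖fderiv ℂ f p - fderiv ℂ f y₀‖ ≤ 2 * M / ρ * ‖p - y₀‖ := by
  rcases eq_or_ne p y₀ with rfl | hne
  · simp
  have hρ : 0 < ρ := pos_of_mem_ball hp
  have hv : 0 < ‖p - y₀‖ := norm_pos_iff.2 (sub_ne_zero.2 hne)
  have hM₀ : 0 ≤ M := (norm_nonneg _).trans (hM y₀ (mem_ball_self hρ))
  have hline : ∀ t ∈ ball (0 : ℂ) (ρ / ‖p - y₀‖), y₀ + t • (p - y₀) ∈ ball y₀ ρ := fun t ht => by
    rw [mem_ball_iff_norm, add_sub_cancel_left, norm_smul, ← lt_div_iff₀ hv]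
    exact mem_ball_zero_iff.1 ht
  refine ContinuousLinearMap.opNorm_le_bound _ (by positivity) fun u => ?_
  set ψ : ℂ → F := fun t => fderiv ℂ f (y₀ + t • (p - y₀)) u
  have hψ : DifferentiableOn ℂ ψ (ball 0 (ρ / ‖p - y₀‖)) :=
    (differentiableOn_fderiv_apply_along_line hf isOpen_ball y₀ (p - y₀) u).mono hline
  have hψM : ∀ t ∈ ball (0 : ℂ) (ρ / ‖p - y₀‖), ‖ψ t‖ ≤ M * ‖u‖ := fun t ht =>
    ((fderiv ℂ f _).le_opNorm u).trans (by gcongr; exact hM _ (hline t ht))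
  have hmaps : MapsTo ψ (ball 0 (ρ / ‖p - y₀‖)) (closedBall (ψ 0) (2 * (M * ‖u‖))) := by
    intro t ht
    rw [mem_closedBall, dist_eq_norm]
    linarith [norm_sub_le (ψ t) (ψ 0), hψM t ht, hψM 0 (mem_ball_self (by positivity))]
  have hone : (1 : ℂ) ∈ ball 0 (ρ / ‖p - y₀‖) := by
    rw [mem_ball_zero_iff, norm_one, one_lt_div hv]
    exact mem_ball_iff_norm.1 hp
  have := Complex.dist_le_div_mul_dist_of_mapsTo_ball hψ hmaps hone
  simp only [ψ, one_smul, zero_smul, add_zero, add_sub_cancel, dist_eq_norm, sub_zero,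
    norm_one, mul_one] at this
  calc ‖(fderiv ℂ f p - fderiv ℂ f y₀) u‖ ≤ 2 * (M * ‖u‖) / (ρ / ‖p - y₀‖) := this
    _ = 2 * M / ρ * ‖p - y₀‖ * ‖u‖ := by field_simp

theorem Convex.injOn_of_norm_fderiv_sub_le {G : Type*} [NormedAddCommGroup G] [NormedSpace ℂ G]
    {f : E → G} {f' : E → E →L[ℂ] G} {s : Set E} {A : E →L[ℂ] G} {T : G →L[ℂ] E} {c : ℝ}
    (hs : Convex ℝ s) (hf : ∀ x ∈ s, HasFDerivWithinAt f (f' x) s x)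
    (hf' : ∀ x ∈ s, ‖f' x - A‖ ≤ c) (hTA : T ∘L A = 1) (hc : ‖T‖ * c < 1) :
    InjOn f s := by
  intro x hx y hy hxy
  have happrox := hs.norm_image_sub_le_of_norm_hasFDerivWithin_le' hf hf' hx hy
  rw [hxy, sub_self, zero_sub, norm_neg] at happrox
  have hle : ‖y - x‖ ≤ ‖T‖ * c * ‖y - x‖ := calc
    ‖y - x‖ = ‖T (A (y - x))‖ := by rw [← ContinuousLinearMap.comp_apply, hTA]; rfl
    _ ≤ ‖T‖ * ‖A (y - x)‖ := T.le_opNorm _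
    _ ≤ ‖T‖ * (c * ‖y - x‖) := by gcongr
    _ = ‖T‖ * c * ‖y - x‖ := by ring
  have hzero : ‖y - x‖ = 0 := by nlinarith [norm_nonneg (y - x)]
  exact (sub_eq_zero.1 (norm_eq_zero.1 hzero)).symm

theorem frequency_map_injective_general
    (d : ℕ) (ρ₀ r L M : ℝ) (hρ₀ : 0 < ρ₀) (hr : 0 < r) (hrρ₀ : r < ρ₀)
    (hL : 0 ≤ L) (hM : 0 ≤ M)
    (y₀ : Fin d → ℂ) (K : (Fin d → ℂ) → ℂ)
    (hK : DifferentiableOn ℂ K (Metric.ball y₀ ρ₀))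
    -- gradient (frequency map) and Hessian of `K`
    (hHessBound : ∀ y ∈ Metric.ball y₀ ρ₀,
      ‖fderiv ℂ (fun z => (fun j => fderiv ℂ K z (Pi.single j 1))) y‖ ≤ M)
    (T : (Fin d → ℂ) →L[ℂ] (Fin d → ℂ))
    (hT1 : T ∘L fderiv ℂ (fun z => (fun j => fderiv ℂ K z (Pi.single j 1))) y₀ = 1)
    (hTnorm : ‖T‖ ≤ L)
    (hsmall : (d : ℝ) ^ 2 * L * M * r / (ρ₀ - r) ≤ 1 / 2) :
    Set.InjOn (fun y => (fun j => fderiv ℂ K y (Pi.single j 1))) (Metric.ball y₀ r) := by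
  rcases Nat.eq_zero_or_pos d with rfl | hd
  · exact Set.subsingleton_of_subsingleton.injOn _
  have hω : DifferentiableOn ℂ (fun y => (fun j => fderiv ℂ K y (Pi.single j 1))) (ball y₀ ρ₀) :=
    differentiableOn_pi.2 fun j => differentiableOn_fderiv_apply hK isOpen_ball _
  have hsub : ball y₀ r ⊆ ball y₀ ρ₀ := ball_subset_ball hrρ₀.le
  have hLMr : 2 * (L * M * r) < ρ₀ := by
    have hd2 : 1 ≤ (d : ℝ) ^ 2 := one_le_pow₀ (by exact_mod_cast hd)
    have hLMr₀ : 0 ≤ L * M * r := by positivity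
    rw [div_le_iff₀ (sub_pos.2 hrρ₀)] at hsmall
    nlinarith
  refine (convex_ball y₀ r).injOn_of_norm_fderiv_sub_le (c := 2 * M / ρ₀ * r)
    (fun p hp =>
      (hω.differentiableAt (isOpen_ball.mem_nhds (hsub hp))).hasFDerivAt.hasFDerivWithinAt)
    (fun p hp => (norm_fderiv_sub_fderiv_le hω hHessBound (hsub hp)).trans ?_) hT1 ?_
  · exact mul_le_mul_of_nonneg_left (mem_ball_iff_norm.1 hp).le (by positivity)
  · calc ‖T‖ * (2 * M / ρ₀ * r) ≤ L * (2 * M / ρ₀ * r) := by gcongr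
      _ = 2 * (L * M * r) / ρ₀ := by ring
      _ < 1 := (div_lt_one hρ₀).2 hLMr

/-- Injectivity of the frequency map (claim inside the proof of Theorem 4): if `K` is
holomorphic on the complex ball `B_{ρ₀}(y₀)`, its Hessian is bounded by `M` there, the Hessian
at `y₀` has an inverse of norm `≤ L`, and `d² L M r / (ρ₀ - r) ≤ 1/2` with `0 < r < ρ₀`, then
the frequency map `ω₀(y) := ∂_y K(y)` is injective on `B_r(y₀)`. -/
theorem frequency_map_injective
    (d : ℕ) (ρ₀ r L M : ℝ) (hρ₀ : 0 < ρ₀) (hr : 0 < r) (hrρ₀ : r < ρ₀)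
    (hL : 0 ≤ L) (hM : 0 ≤ M)
    (y₀ : Fin d → ℂ) (K : (Fin d → ℂ) → ℂ)
    (hK : DifferentiableOn ℂ K (Metric.ball y₀ ρ₀))
    -- gradient (frequency map) and Hessian of `K`
    (hHessBound : ∀ y ∈ Metric.ball y₀ ρ₀,
      ‖fderiv ℂ (fun z => (fun j => fderiv ℂ K z (Pi.single j 1))) y‖ ≤ M)
    (T : (Fin d → ℂ) →L[ℂ] (Fin d → ℂ))
    (hT1 : T ∘L fderiv ℂ (fun z => (fun j => fderiv ℂ K z (Pi.single j 1))) y₀ = 1)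
    (hT2 : fderiv ℂ (fun z => (fun j => fderiv ℂ K z (Pi.single j 1))) y₀ ∘L T = 1)
    (hTnorm : ‖T‖ ≤ L)
    (hsmall : (d : ℝ) ^ 2 * L * M * r / (ρ₀ - r) ≤ 1 / 2) :
    Set.InjOn (fun y => (fun j => fderiv ℂ K y (Pi.single j 1))) (Metric.ball y₀ r) :=
  frequency_map_injective_general d ρ₀ r L M hρ₀ hr hrρ₀ hL hM y₀ K hK hHessBound T hT1 hTnorm
    hsmall
end Coordinates
end
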